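/- arXiv:2209.06744 — 5 statements merged into one kernel-verified Lean document; each statement's English description precedes it below -/
import Mathlib

section
/- There is no L(1,2)-edge labeling of the infinite octagonal grid T8 with labels in {0,…,25}; that is, the span λ'_{1,2}(T8) of L(1,2)-edge labeling of T8 is at least 26. -/
/-!
The four corners of a unit square are pairwise adjacent, so any two of the 26 edges meeting a
unit square are at distance at most 2. A labeling with span 25 therefore uses each label
0, …, 25 exactly once around every unit square, and two edges around a square with consecutive
labels share an endpoint. Hence, for unit squares S and T, the edge around S labelled k lies
around T iff the edge around S labelled k + 1 does: the edge around T with that label meets the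
first one too, and two edges meeting a common edge carry distinct labels. So the edges around
S(0,0) lie either all or none around S(2,0); but {(1,0),(2,0)} does and {(-1,0),(0,0)} does not.
-/

/-- The infinite octagonal grid (king graph on `ℤ × ℤ`): distinct vertices are
adjacent iff their Chebyshev distance is `1`. -/
def T8 : SimpleGraph (ℤ × ℤ) where
  Adj u v := u ≠ v ∧ max |u.1 - v.1| |u.2 - v.2| = 1
  symm := by
    constructor
    rintro u v ⟨h1, h2⟩
    refine ⟨h1.symm, ?_⟩
    rw [abs_sub_comm v.1 u.1, abs_sub_comm v.2 u.2]
    exact h2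
  loopless := by constructor; rintro u ⟨h, -⟩; exact h rfl

/-- Two (unordered pairs regarded as) edges share an endpoint. -/
def SharesEndpoint (e1 e2 : Sym2 (ℤ × ℤ)) : Prop := ∃ v, v ∈ e1 ∧ v ∈ e2

/-- Two edges of `T8` are at distance `1`: distinct and sharing an endpoint. -/
def EdgeDist1 (e1 e2 : Sym2 (ℤ × ℤ)) : Prop := e1 ≠ e2 ∧ SharesEndpoint e1 e2

/-- Two edges of `T8` are at distance `2`: distinct, sharing no endpoint, but some
edge of `T8` shares an endpoint with both. -/
def EdgeDist2 (e1 e2 : Sym2 (ℤ × ℤ)) : Prop :=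
  e1 ≠ e2 ∧ ¬ SharesEndpoint e1 e2 ∧
    ∃ e3 ∈ T8.edgeSet, SharesEndpoint e1 e3 ∧ SharesEndpoint e3 e2

/-- `f` is an `L(1,2)`-edge labeling of `T8`: edges at distance `1` get distinct
labels and edges at distance `2` get labels differing by at least `2`. -/
def IsL12 (f : Sym2 (ℤ × ℤ) → ℕ) : Prop :=
  (∀ e1 ∈ T8.edgeSet, ∀ e2 ∈ T8.edgeSet, EdgeDist1 e1 e2 → f e1 ≠ f e2) ∧
  (∀ e1 ∈ T8.edgeSet, ∀ e2 ∈ T8.edgeSet, EdgeDist2 e1 e2 → 2 ≤ |(f e1 : ℤ) - (f e2 : ℤ)|)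

/-- An `L(1,2)`-edge labeling of `T8` with labels in `{0, …, n}`. -/
def IsL12Bounded (n : ℕ) (f : Sym2 (ℤ × ℤ) → ℕ) : Prop :=
  IsL12 f ∧ ∀ e ∈ T8.edgeSet, f e ≤ n

/-- The unit square `S(a,b)`. -/
def unitSquare (a b : ℤ) : Set (ℤ × ℤ) :=
  {(a, b), (a + 1, b), (a, b + 1), (a + 1, b + 1)}

/-- `GS S`: the set of edges of `T8` incident to at least one vertex of `S`. -/
def GS (S : Set (ℤ × ℤ)) : Set (Sym2 (ℤ × ℤ)) :=
  {e | e ∈ T8.edgeSet ∧ ∃ v ∈ S, v ∈ e}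

/-- `Sprime a b`: vertices at Chebyshev distance at most `2` from some vertex of
`S(a,b)` (that is, `S ∪ N(S) ∪ N(N(S))`). -/
def Sprime (a b : ℤ) : Set (ℤ × ℤ) :=
  {u | ∃ v ∈ unitSquare a b, max |u.1 - v.1| |u.2 - v.2| ≤ 2}

/-- Two edges sharing an endpoint `v`, written `e1 = {v, v+d1}` and `e2 = {v, v+d2}`,
are at angle `45°` if exactly one of `d1, d2` has both coordinates nonzero and
`d1 · d2 = 1`. -/
def Angle45 (e1 e2 : Sym2 (ℤ × ℤ)) : Prop :=
  ∃ v d1 d2 : ℤ × ℤ, e1 = s(v, v + d1) ∧ e2 = s(v, v + d2) ∧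
    Xor' (d1.1 ≠ 0 ∧ d1.2 ≠ 0) (d2.1 ≠ 0 ∧ d2.2 ≠ 0) ∧
    d1.1 * d2.1 + d1.2 * d2.2 = 1

/-- An edge is slanting if its endpoints differ in both coordinates. -/
def Slanting (e : Sym2 (ℤ × ℤ)) : Prop :=
  ∃ u v : ℤ × ℤ, e = s(u, v) ∧ u.1 ≠ v.1 ∧ u.2 ≠ v.2

/-- `e, e', e''` form the edge set of a triangle of `T8`. -/
def TriangleEdgeSet (e e' e'' : Sym2 (ℤ × ℤ)) : Prop :=
  ∃ u v w : ℤ × ℤ, T8.Adj u v ∧ T8.Adj v w ∧ T8.Adj u w ∧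
    ({e, e', e''} : Set (Sym2 (ℤ × ℤ))) = {s(u, v), s(v, w), s(u, w)}

/-- A triangle of `T8`: three pairwise adjacent vertices. -/
def IsTriangle (t : Finset (ℤ × ℤ)) : Prop :=
  t.card = 3 ∧ ∀ u ∈ t, ∀ v ∈ t, u ≠ v → T8.Adj u v

/-- The edges of a triangle. -/
def triangleEdges (t : Finset (ℤ × ℤ)) : Set (Sym2 (ℤ × ℤ)) :=
  {e | ∃ u ∈ t, ∃ v ∈ t, u ≠ v ∧ e = s(u, v)}

theorem T8_adj_add_iff (u d : ℤ × ℤ) : T8.Adj u (u + d) ↔ d ≠ 0 ∧ max |d.1| |d.2| = 1 := by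
  simp [T8, abs_neg]

theorem isClique_unitSquare (a b : ℤ) : T8.IsClique (unitSquare a b) := by
  intro u hu v hv huv
  simp only [unitSquare, Set.mem_insert_iff, Set.mem_singleton_iff] at hu hv
  refine ⟨huv, ?_⟩
  rcases hu with rfl | rfl | rfl | rfl <;> rcases hv with rfl | rfl | rfl | rfl <;>
    simp_all

theorem SharesEndpoint.symm {e₁ e₂ : Sym2 (ℤ × ℤ)} (h : SharesEndpoint e₁ e₂) :
    SharesEndpoint e₂ e₁ :=
  let ⟨v, h₁, h₂⟩ := h; ⟨v, h₂, h₁⟩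

theorem sharesEndpoint_self (e : Sym2 (ℤ × ℤ)) : SharesEndpoint e e :=
  e.ind fun u _ => ⟨u, Sym2.mem_mk_left _ _, Sym2.mem_mk_left _ _⟩

theorem edgeDist2_of_mem_GS {S : Set (ℤ × ℤ)} (hS : T8.IsClique S) {e₁ e₂ : Sym2 (ℤ × ℤ)}
    (h₁ : e₁ ∈ GS S) (h₂ : e₂ ∈ GS S) (hne : e₁ ≠ e₂) (hs : ¬ SharesEndpoint e₁ e₂) :
    EdgeDist2 e₁ e₂ := by
  obtain ⟨-, u, hu, hue⟩ := h₁
  obtain ⟨-, v, hv, hve⟩ := h₂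
  have huv : u ≠ v := by
    rintro rfl
    exact hs ⟨u, hue, hve⟩
  exact ⟨hne, hs, s(u, v), hS hu hv huv, ⟨u, hue, Sym2.mem_mk_left _ _⟩,
    ⟨v, Sym2.mem_mk_right _ _, hve⟩⟩

namespace IsL12

variable {f : Sym2 (ℤ × ℤ) → ℕ}

theorem sharesEndpoint_of_abs_sub_lt_two (hf : IsL12 f) {S : Set (ℤ × ℤ)}
    (hS : T8.IsClique S) {e₁ e₂ : Sym2 (ℤ × ℤ)} (h₁ : e₁ ∈ GS S) (h₂ : e₂ ∈ GS S)
    (hlt : |(f e₁ : ℤ) - f e₂| < 2) : SharesEndpoint e₁ e₂ := by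
  by_contra hs
  have hne : e₁ ≠ e₂ := by
    rintro rfl
    exact hs (sharesEndpoint_self e₁)
  have := hf.2 e₁ h₁.1 e₂ h₂.1 (edgeDist2_of_mem_GS hS h₁ h₂ hne hs)
  omega

theorem injOn_GS (hf : IsL12 f) {S : Set (ℤ × ℤ)} (hS : T8.IsClique S) :
    Set.InjOn f (GS S) := by
  intro e₁ h₁ e₂ h₂ heq
  by_contra hne
  exact hf.1 e₁ h₁.1 e₂ h₂.1
    ⟨hne, hf.sharesEndpoint_of_abs_sub_lt_two hS h₁ h₂ (by simp [heq])⟩ heq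

theorem eq_of_sharesEndpoint (hf : IsL12 f) {e₀ e₁ e₂ : Sym2 (ℤ × ℤ)}
    (h₀ : e₀ ∈ T8.edgeSet) (h₁ : e₁ ∈ T8.edgeSet) (h₂ : e₂ ∈ T8.edgeSet)
    (hs₁ : SharesEndpoint e₁ e₀) (hs₂ : SharesEndpoint e₀ e₂) (heq : f e₁ = f e₂) :
    e₁ = e₂ := by
  by_contra hne
  by_cases hs : SharesEndpoint e₁ e₂
  · exact hf.1 e₁ h₁ e₂ h₂ ⟨hne, hs⟩ heq
  · have := hf.2 e₁ h₁ e₂ h₂ ⟨hne, hs, e₀, h₀, hs₁, hs₂⟩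
    simp [heq] at this

end IsL12

def squareCorners : Finset (ℤ × ℤ) := {(0, 0), (1, 0), (0, 1), (1, 1)}

def kingMoves : Finset (ℤ × ℤ) :=
  {(-1, -1), (-1, 0), (-1, 1), (0, -1), (0, 1), (1, -1), (1, 0), (1, 1)}

/-- Of the 32 pairs (corner, king move), the six edges joining two corners are met twice. -/
def unitSquareEdges (a b : ℤ) : Finset (Sym2 (ℤ × ℤ)) :=
  (squareCorners ×ˢ kingMoves).image fun p => s((a, b) + p.1, (a, b) + p.1 + p.2)

theorem unitSquareEdges_eq_image (a b : ℤ) :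
    unitSquareEdges a b = (unitSquareEdges 0 0).image (Sym2.map ((a, b) + ·)) := by
  simp only [unitSquareEdges, Finset.image_image]
  congr 1
  ext p
  simp [Sym2.map_mk, add_assoc, Prod.mk_zero_zero]

theorem card_unitSquareEdges (a b : ℤ) : (unitSquareEdges a b).card = 26 := by
  rw [unitSquareEdges_eq_image, Finset.card_image_of_injective _
    (Sym2.map.injective (add_right_injective _))]
  decide

theorem unitSquareEdges_subset_GS (a b : ℤ) :
    ↑(unitSquareEdges a b) ⊆ GS (unitSquare a b) := by
  intro e he
  simp only [unitSquareEdges, Finset.coe_image, Set.mem_image, Finset.mem_coe] at he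
  obtain ⟨⟨p, d⟩, hpd, rfl⟩ := he
  obtain ⟨hp, hdm⟩ := Finset.mem_product.mp hpd
  have hd : d ≠ 0 ∧ max |d.1| |d.2| = 1 :=
    (by decide : ∀ d ∈ kingMoves, d ≠ 0 ∧ max |d.1| |d.2| = 1) d hdm
  refine ⟨(T8_adj_add_iff _ d).mpr hd, (a, b) + p, ?_, Sym2.mem_mk_left _ _⟩
  simp only [squareCorners, Finset.mem_insert, Finset.mem_singleton] at hp
  rcases hp with rfl | rfl | rfl | rfl <;> simp [unitSquare]

namespace IsL12Bounded

variable {f : Sym2 (ℤ × ℤ) → ℕ}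

theorem exists_mem_GS_unitSquare (hf : IsL12Bounded 25 f) (a b : ℤ) {k : ℕ} (hk : k ≤ 25) :
    ∃ e ∈ GS (unitSquare a b), f e = k := by
  have hsub := unitSquareEdges_subset_GS a b
  have hinj : Set.InjOn f (unitSquareEdges a b) :=
    (hf.1.injOn_GS (isClique_unitSquare a b)).mono hsub
  obtain ⟨e, he, hfe⟩ := Finset.surj_on_of_inj_on_of_card_le (t := Finset.range 26)
    (fun e _ => f e) (fun e he => Finset.mem_range.2 (Nat.lt_succ_of_le (hf.2 e (hsub he).1)))
    (fun _ _ h₁ h₂ h => hinj h₁ h₂ h) (by simp [card_unitSquareEdges]) k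
    (Finset.mem_range.2 (by omega))
  exact ⟨e, hsub he, hfe.symm⟩

theorem mem_GS_of_abs_sub_lt_two (hf : IsL12Bounded 25 f) {a b c d : ℤ}
    {e₁ e₂ : Sym2 (ℤ × ℤ)} (h₁ : e₁ ∈ GS (unitSquare a b)) (h₂ : e₂ ∈ GS (unitSquare a b))
    (h₁' : e₁ ∈ GS (unitSquare c d)) (hlt : |(f e₁ : ℤ) - f e₂| < 2) :
    e₂ ∈ GS (unitSquare c d) := by
  obtain ⟨e, he, hfe⟩ := hf.exists_mem_GS_unitSquare c d (hf.2 e₂ h₂.1)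
  have hs : SharesEndpoint e₁ e₂ :=
    hf.1.sharesEndpoint_of_abs_sub_lt_two (isClique_unitSquare a b) h₁ h₂ hlt
  have hs' : SharesEndpoint e₁ e :=
    hf.1.sharesEndpoint_of_abs_sub_lt_two (isClique_unitSquare c d) h₁' he (by rwa [hfe])
  rwa [← hf.1.eq_of_sharesEndpoint h₁.1 he.1 h₂.1 hs'.symm hs hfe]

theorem labelClass_subset_GS_iff_succ (hf : IsL12Bounded 25 f) (a b c d : ℤ) {k : ℕ}
    (hk : k < 25) :
    (∀ e ∈ GS (unitSquare a b), f e = k → e ∈ GS (unitSquare c d)) ↔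
      ∀ e ∈ GS (unitSquare a b), f e = k + 1 → e ∈ GS (unitSquare c d) := by
  constructor
  · intro h e he hfe
    obtain ⟨e', he', hfe'⟩ := hf.exists_mem_GS_unitSquare a b hk.le
    exact hf.mem_GS_of_abs_sub_lt_two he' he (h e' he' hfe') (by rw [hfe, hfe']; norm_num)
  · intro h e he hfe
    obtain ⟨e', he', hfe'⟩ := hf.exists_mem_GS_unitSquare a b hk
    exact hf.mem_GS_of_abs_sub_lt_two he' he (h e' he' hfe') (by rw [hfe, hfe']; norm_num)

theorem labelClass_subset_GS_iff (hf : IsL12Bounded 25 f) (a b c d : ℤ) {k l : ℕ}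
    (hk : k ≤ 25) (hl : l ≤ 25) :
    (∀ e ∈ GS (unitSquare a b), f e = k → e ∈ GS (unitSquare c d)) ↔
      ∀ e ∈ GS (unitSquare a b), f e = l → e ∈ GS (unitSquare c d) := by
  suffices h : ∀ k ≤ 25, (∀ e ∈ GS (unitSquare a b), f e = 0 → e ∈ GS (unitSquare c d)) ↔
      ∀ e ∈ GS (unitSquare a b), f e = k → e ∈ GS (unitSquare c d) from
    (h k hk).symm.trans (h l hl)
  intro k hk
  induction k with
  | zero => rfl
  | succ k ih => exact (ih (by omega)).trans (hf.labelClass_subset_GS_iff_succ a b c d hk)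

end IsL12Bounded

/-- There is no `L(1,2)`-edge labeling of `T8` with labels in
`{0, …, 25}`, i.e. the span is at least `26`. -/
theorem no_L12_labeling_25 : ¬ ∃ f : Sym2 (ℤ × ℤ) → ℕ, IsL12Bounded 25 f := by
  rintro ⟨f, hf⟩
  have hA : s(((1 : ℤ), (0 : ℤ)), (2, 0)) ∈ GS (unitSquare 0 0) ∩ GS (unitSquare 2 0) := by
    simp [GS, unitSquare, T8]
  have hB : s(((-1 : ℤ), (0 : ℤ)), (0, 0)) ∈ GS (unitSquare 0 0) \ GS (unitSquare 2 0) := by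
    simp [GS, unitSquare, T8]
  have hclassA : ∀ e ∈ GS (unitSquare 0 0), f e = f s((1, 0), (2, 0)) → e ∈ GS (unitSquare 2 0) :=
    fun e he hfe => hf.1.injOn_GS (isClique_unitSquare 0 0) he hA.1 hfe ▸ hA.2
  exact hB.2 ((hf.labelClass_subset_GS_iff 0 0 2 0 (hf.2 _ hA.1.1) (hf.2 _ hB.1.1)).mp hclassA
    _ hB.1 rfl)
end

section
/- There is no L(1,2)-edge labeling of the infinite octagonal grid T8 with labels in {0,…,26}; that is, the span λ'_{1,2}(T8) of L(1,2)-edge labeling of T8 is at least 27. -/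
/-! Split the labels `0, …, 26` into the 14 classes `{2k, 2k + 1}`. Two edges of one class are
never at distance 2, so either they share an endpoint, or all their endpoints are at Chebyshev
distance at least 2; and no edge has two neighbours in its own class. The shadow of a set `X` of
vertices is `X + [0,1]²`: shadows of far apart sets are disjoint, and of two neighbours in one
class, the one with the larger label takes the 4 cells of the shadow of its private endpoint while
the other keeps at least 4 cells of the rest of its shadow. So each class has at most one edge per
4 cells, whereas `T8` has 4 edges per vertex, and `14 / 4 < 4`. -/

open Finset Pointwise

namespace T8EdgeLabeling

theorem card_mul_le_of_disjoint_on_fibers {ι α : Type*} [DecidableEq α] {s : Finset ι}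
    {B : Finset α} {g : ι → ℕ} {m c : ℕ} {T : ι → Finset α} (hg : ∀ i ∈ s, g i < m)
    (hTB : ∀ i ∈ s, T i ⊆ B) (hc : ∀ i ∈ s, c ≤ #(T i))
    (hT : ∀ i ∈ s, ∀ j ∈ s, i ≠ j → g i = g j → Disjoint (T i) (T j)) :
    c * #s ≤ m * #B := by
  have fiber_le : ∀ k, c * #{i ∈ s | g i = k} ≤ #B := fun k => by
    calc c * #{i ∈ s | g i = k}
        = ∑ i ∈ s with g i = k, c := by rw [sum_const, smul_eq_mul, mul_comm]
      _ ≤ ∑ i ∈ s with g i = k, #(T i) := sum_le_sum fun i hi => hc i (mem_filter.1 hi).1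
      _ = #({i ∈ s | g i = k}.biUnion T) := by
        refine (card_biUnion fun i hi j hj hij => ?_).symm
        rw [coe_filter] at hi hj
        exact hT i hi.1 j hj.1 hij (hi.2.trans hj.2.symm)
      _ ≤ #B := card_le_card (biUnion_subset.2 fun i hi => hTB i (mem_filter.1 hi).1)
  calc c * #s = ∑ k ∈ range m, c * #{i ∈ s | g i = k} := by
        rw [card_eq_sum_card_fiberwise fun i hi => mem_range.2 (hg i hi), mul_sum]
    _ ≤ ∑ _k ∈ range m, #B := sum_le_sum fun k _ => fiber_le k
    _ = m * #B := by rw [sum_const, card_range, smul_eq_mul]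

/-- Every edge of `T8` is `s(v, v + dir i)` for exactly one pair `(v, i)`. -/
def dir : Fin 4 → ℤ × ℤ
  | 0 => (1, 0)
  | 1 => (0, 1)
  | 2 => (1, 1)
  | 3 => (1, -1)

def endOffsets (i : Fin 4) : Finset (ℤ × ℤ) := {0, dir i}

def ends (p : (ℤ × ℤ) × Fin 4) : Finset (ℤ × ℤ) := p.1 +ᵥ endOffsets p.2

def edge (p : (ℤ × ℤ) × Fin 4) : Sym2 (ℤ × ℤ) := s(p.1, p.1 + dir p.2)

lemma mem_edge {x : ℤ × ℤ} {p : (ℤ × ℤ) × Fin 4} : x ∈ edge p ↔ x ∈ ends p := by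
  simp [edge, ends, endOffsets, Sym2.mem_iff, mem_vadd_finset, eq_comm]

lemma ends_add_fst (v : ℤ × ℤ) (p : (ℤ × ℤ) × Fin 4) : ends (v + p.1, p.2) = v +ᵥ ends p :=
  add_vadd _ _ _

lemma ends_eq_vadd (p : (ℤ × ℤ) × Fin 4) : ends p = p.1 +ᵥ ends (0, p.2) := by
  rw [← ends_add_fst, add_zero]

lemma adj_add_dir (v : ℤ × ℤ) (i : Fin 4) : T8.Adj v (v + dir i) := by
  fin_cases i <;> simp [T8, dir, Prod.ext_iff]

lemma edge_mem_edgeSet (p : (ℤ × ℤ) × Fin 4) : edge p ∈ T8.edgeSet :=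
  adj_add_dir p.1 p.2

lemma edge_injective : Function.Injective edge := by
  have dir_injective : Function.Injective dir := by decide
  have dir_add_dir_ne_zero : ∀ i j, dir i + dir j ≠ 0 := by decide
  rintro ⟨v, i⟩ ⟨w, j⟩ h
  rcases Sym2.eq_iff.mp h with ⟨rfl, h⟩ | ⟨h₁, h₂⟩
  · exact Prod.ext rfl (dir_injective (add_left_cancel h))
  · simp only at h₁ h₂
    exact absurd (by linear_combination h₂ - h₁) (dir_add_dir_ne_zero i j)

def cell : Finset (ℤ × ℤ) := {(0, 0), (1, 0), (0, 1), (1, 1)}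

def shadow (X : Finset (ℤ × ℤ)) : Finset (ℤ × ℤ) := X + cell

lemma shadow_vadd (v : ℤ × ℤ) (X : Finset (ℤ × ℤ)) : shadow (v +ᵥ X) = v +ᵥ shadow X :=
  vadd_add_assoc _ _ _

lemma shadow_mono {X Y : Finset (ℤ × ℤ)} (h : X ⊆ Y) : shadow X ⊆ shadow Y :=
  add_subset_add_right h

lemma four_le_card_shadow {X : Finset (ℤ × ℤ)} (hX : X.Nonempty) : 4 ≤ #(shadow X) :=
  card_le_card_add_left (t := cell) hX

def FarApart (X Y : Finset (ℤ × ℤ)) : Prop :=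
  ∀ x ∈ X, ∀ y ∈ Y, 2 ≤ max |x.1 - y.1| |x.2 - y.2|

lemma disjoint_shadow_of_farApart {X Y : Finset (ℤ × ℤ)} (h : FarApart X Y) :
    Disjoint (shadow X) (shadow Y) := by
  rw [disjoint_left]
  rintro _ hc hc'
  obtain ⟨x, hx, u, hu, rfl⟩ := mem_add.mp hc
  obtain ⟨y, hy, w, hw, hxy⟩ := mem_add.mp hc'
  have hfar := h x hx y hy
  have hcell : ∀ u ∈ cell, 0 ≤ u.1 ∧ u.1 ≤ 1 ∧ 0 ≤ u.2 ∧ u.2 ≤ 1 := by decide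
  have := hcell u hu
  have := hcell w hw
  rw [Prod.ext_iff] at hxy
  simp only [Prod.fst_add, Prod.snd_add] at hxy
  rw [le_max_iff, le_abs, le_abs] at hfar
  omega

lemma adj_of_ne_of_max_lt_two {x y : ℤ × ℤ} (hne : x ≠ y)
    (h : max |x.1 - y.1| |x.2 - y.2| < 2) : T8.Adj x y := by
  refine ⟨hne, le_antisymm ?_ ?_⟩
  · generalize max |x.1 - y.1| |x.2 - y.2| = m at h ⊢
    omega
  · rw [ne_eq, Prod.ext_iff] at hne
    rw [le_max_iff, le_abs, le_abs]
    omega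

variable {f : Sym2 (ℤ × ℤ) → ℕ} {p q r : (ℤ × ℤ) × Fin 4}

lemma sharesEndpoint_edge_iff :
    SharesEndpoint (edge p) (edge q) ↔ ¬Disjoint (ends p) (ends q) := by
  simp only [SharesEndpoint, mem_edge, not_disjoint_iff]

lemma ne_of_not_disjoint (hf : IsL12 f) (hpq : p ≠ q) (h : ¬Disjoint (ends p) (ends q)) :
    f (edge p) ≠ f (edge q) :=
  hf.1 _ (edge_mem_edgeSet p) _ (edge_mem_edgeSet q)
    ⟨edge_injective.ne hpq, sharesEndpoint_edge_iff.2 h⟩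

lemma two_le_of_edgeDist2 (hf : IsL12 f) (h : EdgeDist2 (edge p) (edge q)) :
    2 ≤ |(f (edge p) : ℤ) - f (edge q)| :=
  hf.2 _ (edge_mem_edgeSet p) _ (edge_mem_edgeSet q) h

def labelClass (f : Sym2 (ℤ × ℤ) → ℕ) (p : (ℤ × ℤ) × Fin 4) : ℕ := f (edge p) / 2

lemma not_disjoint_or_farApart (hf : IsL12 f) (hpq : p ≠ q)
    (hc : labelClass f p = labelClass f q) :
    ¬Disjoint (ends p) (ends q) ∨ FarApart (ends p) (ends q) := by
  by_contra! h
  obtain ⟨hdisj, hnear⟩ := h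
  simp only [FarApart, not_forall, not_le] at hnear
  obtain ⟨x, hx, y, hy, hlt⟩ := hnear
  have hxy : x ≠ y := fun h => disjoint_left.1 hdisj hx (h ▸ hy)
  have hdist := two_le_of_edgeDist2 hf
    ⟨edge_injective.ne hpq, fun h => sharesEndpoint_edge_iff.1 h hdisj, s(x, y),
      adj_of_ne_of_max_lt_two hxy hlt, ⟨x, mem_edge.2 hx, Sym2.mem_mk_left _ _⟩,
      ⟨y, Sym2.mem_mk_right _ _, mem_edge.2 hy⟩⟩
  simp only [labelClass] at hc
  rw [le_abs] at hdist
  omega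

def IsPartner (f : Sym2 (ℤ × ℤ) → ℕ) (p q : (ℤ × ℤ) × Fin 4) : Prop :=
  q ≠ p ∧ labelClass f q = labelClass f p ∧ ¬Disjoint (ends p) (ends q)

lemma IsPartner.symm (h : IsPartner f p q) : IsPartner f q p :=
  ⟨h.1.symm, h.2.1.symm, fun hd => h.2.2 hd.symm⟩

lemma partner_unique (hf : IsL12 f) (hq : IsPartner f p q) (hr : IsPartner f p r) :
    q = r := by
  by_contra hqr
  have hpq := ne_of_not_disjoint hf hq.1.symm hq.2.2
  have hpr := ne_of_not_disjoint hf hr.1.symm hr.2.2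
  have hfqr : f (edge q) = f (edge r) := by
    have := hq.2.1
    have := hr.2.1
    simp only [labelClass] at *
    omega
  by_cases hs : Disjoint (ends q) (ends r)
  · obtain ⟨x, hxp, hxq⟩ := not_disjoint_iff.1 hq.2.2
    obtain ⟨y, hyp, hyr⟩ := not_disjoint_iff.1 hr.2.2
    have hdist := two_le_of_edgeDist2 hf
      ⟨edge_injective.ne hqr, fun h => sharesEndpoint_edge_iff.1 h hs, edge p, edge_mem_edgeSet p,
        ⟨x, mem_edge.2 hxq, mem_edge.2 hxp⟩, ⟨y, mem_edge.2 hyp, mem_edge.2 hyr⟩⟩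
    rw [hfqr, sub_self, abs_zero] at hdist
    exact absurd hdist (by norm_num)
  · exact ne_of_not_disjoint hf hqr hs hfqr

lemma eq_of_ends_subset (h : ends p ⊆ ends q) : p = q := by
  have card_ends : ∀ p, #(ends p) = 2 := fun p => by
    rw [ends, card_vadd_finset]
    generalize p.2 = i
    revert i
    decide
  have hpq := eq_of_subset_of_card_le h ((card_ends q).trans (card_ends p).symm).le
  exact edge_injective (Sym2.ext fun x => by rw [mem_edge, mem_edge, hpq])

lemma sub_mem_of_not_disjoint (h : ¬Disjoint (ends p) (ends q)) :
    q.1 - p.1 ∈ endOffsets p.2 - endOffsets q.2 := by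
  obtain ⟨x, hxp, hxq⟩ := not_disjoint_iff.1 h
  obtain ⟨a, ha, rfl⟩ := mem_vadd_finset.1 hxp
  obtain ⟨b, hb, hx⟩ := mem_vadd_finset.1 hxq
  simp only [vadd_eq_add] at hx
  exact mem_sub.2 ⟨a, ha, b, hb, by linear_combination -hx⟩

lemma four_le_card_shadow_sdiff_of_fst_eq_zero :
    ∀ i j : Fin 4, ∀ Δ ∈ endOffsets i - endOffsets j, ((0 : ℤ × ℤ), i) ≠ (Δ, j) →
      4 ≤ #(shadow (ends (0, i)) \ shadow (ends (Δ, j) \ ends (0, i))) := by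
  decide

lemma four_le_card_shadow_sdiff (hpq : p ≠ q) (h : ¬Disjoint (ends p) (ends q)) :
    4 ≤ #(shadow (ends p) \ shadow (ends q \ ends p)) := by
  have hq : ends q = p.1 +ᵥ ends (q.1 - p.1, q.2) := by rw [← ends_add_fst, add_sub_cancel]
  rw [ends_eq_vadd p, hq, ← vadd_finset_sdiff, shadow_vadd, shadow_vadd, ← vadd_finset_sdiff,
    card_vadd_finset]
  refine four_le_card_shadow_sdiff_of_fst_eq_zero p.2 q.2 _ (sub_mem_of_not_disjoint h) ?_
  rw [ne_eq, Prod.ext_iff, eq_comm, sub_eq_zero]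
  exact fun h' => hpq (Prod.ext h'.1.symm h'.2)

open Classical in
noncomputable def territory (f : Sym2 (ℤ × ℤ) → ℕ) (p : (ℤ × ℤ) × Fin 4) : Finset (ℤ × ℤ) :=
  if h : ∃ q, IsPartner f p q then
    if f (edge p) < f (edge h.choose) then shadow (ends p) \ shadow (ends h.choose \ ends p)
    else shadow (ends p \ ends h.choose)
  else shadow (ends p)

lemma territory_of_isPartner (hf : IsL12 f) (h : IsPartner f p q) :
    territory f p = if f (edge p) < f (edge q) then shadow (ends p) \ shadow (ends q \ ends p)
      else shadow (ends p \ ends q) := by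
  have hex : ∃ q, IsPartner f p q := ⟨q, h⟩
  rw [territory, dif_pos hex, partner_unique hf hex.choose_spec h]

lemma territory_subset_shadow : territory f p ⊆ shadow (ends p) := by
  unfold territory
  split_ifs
  · exact sdiff_subset
  · exact shadow_mono sdiff_subset
  · exact Subset.rfl

lemma four_le_card_territory (f : Sym2 (ℤ × ℤ) → ℕ) (p : (ℤ × ℤ) × Fin 4) :
    4 ≤ #(territory f p) := by
  unfold territory
  split_ifs with h
  · exact four_le_card_shadow_sdiff h.choose_spec.1.symm h.choose_spec.2.2
  · exact four_le_card_shadow <| sdiff_nonempty.2 fun hsub =>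
      h.choose_spec.1 (eq_of_ends_subset hsub).symm
  · exact four_le_card_shadow (insert_nonempty _ _).vadd_finset

lemma disjoint_territory (hf : IsL12 f) (hpq : p ≠ q) (hc : labelClass f p = labelClass f q) :
    Disjoint (territory f p) (territory f q) := by
  rcases not_disjoint_or_farApart hf hpq hc with hs | hfar
  · have hpartner : IsPartner f p q := ⟨hpq.symm, hc.symm, hs⟩
    have hne := ne_of_not_disjoint hf hpq hs
    rw [territory_of_isPartner hf hpartner, territory_of_isPartner hf hpartner.symm]
    split_ifs <;> first | omega | exact sdiff_disjoint | exact disjoint_sdiff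
  · exact (disjoint_shadow_of_farApart hfar).mono territory_subset_shadow territory_subset_shadow

noncomputable def baseBox (n : ℕ) : Finset ((ℤ × ℤ) × Fin 4) :=
  (Ico 0 (n : ℤ) ×ˢ Ico 0 (n : ℤ)) ×ˢ univ

noncomputable def cellBox (n : ℕ) : Finset (ℤ × ℤ) := Icc 0 (n + 1 : ℤ) ×ˢ Icc (-1) (n + 1 : ℤ)

lemma shadow_ends_subset_cellBox {n : ℕ} (hp : p ∈ baseBox n) :
    shadow (ends p) ⊆ cellBox n := by
  have hoffsets : ∀ i : Fin 4, ∀ u ∈ shadow (ends (0, i)),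
      0 ≤ u.1 ∧ u.1 ≤ 2 ∧ -1 ≤ u.2 ∧ u.2 ≤ 2 := by
    decide
  intro c hc
  rw [ends_eq_vadd, shadow_vadd, mem_vadd_finset] at hc
  obtain ⟨u, hu, rfl⟩ := hc
  have := hoffsets _ u hu
  simp only [baseBox, cellBox, mem_product, mem_Ico, mem_Icc, mem_univ, and_true] at hp ⊢
  simp only [vadd_eq_add, Prod.fst_add, Prod.snd_add]
  omega

lemma card_baseBox (n : ℕ) : #(baseBox n) = 4 * n ^ 2 := by
  rw [baseBox, card_product, card_product, Int.card_Ico, card_univ, Fintype.card_fin]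
  simp only [sub_zero, Int.toNat_natCast]
  ring

lemma card_cellBox (n : ℕ) : #(cellBox n) = (n + 2) * (n + 3) := by
  have hx : ((n + 1 : ℤ) + 1 - 0).toNat = n + 2 := by omega
  have hy : ((n + 1 : ℤ) + 1 - -1).toNat = n + 3 := by omega
  rw [cellBox, card_product, Int.card_Icc, Int.card_Icc, hx, hy]

theorem sixteen_mul_sq_le_of_labelClass_lt (hf : IsL12 f) {m : ℕ} (hm : ∀ p, labelClass f p < m)
    (n : ℕ) : 16 * n ^ 2 ≤ m * ((n + 2) * (n + 3)) := by
  have hpacking := card_mul_le_of_disjoint_on_fibers (s := baseBox n) (B := cellBox n)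
    (c := 4) (T := territory f) (fun p _ => hm p)
    (fun p hp => territory_subset_shadow.trans (shadow_ends_subset_cellBox hp))
    (fun p _ => four_le_card_territory f p)
    (fun p _ q _ hpq hc => disjoint_territory hf hpq hc)
  rwa [card_baseBox, card_cellBox, ← mul_assoc] at hpacking

end T8EdgeLabeling

open T8EdgeLabeling

/-- There is no `L(1,2)`-edge labeling of `T8` with labels in
`{0, …, 26}`, i.e. the span is at least `27`. -/
theorem no_L12_labeling_26 : ¬ ∃ f : Sym2 (ℤ × ℤ) → ℕ, IsL12Bounded 26 f := by
  rintro ⟨f, hf, hbound⟩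
  have hclass : ∀ p, labelClass f p < 14 := fun p => by
    have := hbound _ (edge_mem_edgeSet p)
    unfold labelClass
    omega
  have := sixteen_mul_sq_le_of_labelClass_lt hf hclass 100
  norm_num at this
end

section
/- Let f be an L(1,2)-edge labeling of T8, let S be a unit square in T8, and let e1, e2 ∈ G_S be edges with f(e2) = f(e1) + 1. Then e1 and e2 share an endpoint, i.e., they are at distance 1 in T8. -/
/-- If `e1, e2 ∈ G_S` get consecutive labels under an `L(1,2)`-edge
labeling, then they share an endpoint, i.e. they are at distance `1`. -/
theorem consecutive_labels_share_endpoint (f : Sym2 (ℤ × ℤ) → ℕ) (hf : IsL12 f)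
    (a b : ℤ) (e1 e2 : Sym2 (ℤ × ℤ))
    (he1 : e1 ∈ GS (unitSquare a b)) (he2 : e2 ∈ GS (unitSquare a b))
    (h : f e2 = f e1 + 1) : EdgeDist1 e1 e2 := by
  obtain ⟨he1E, v1, hv1S, hv1⟩ := he1
  obtain ⟨he2E, v2, hv2S, hv2⟩ := he2
  have hne : e1 ≠ e2 := by
    intro heq; rw [heq] at h; omega
  refine ⟨hne, ?_⟩
  by_contra hsh
  have hv12 : v1 ≠ v2 := fun heq => hsh ⟨v1, hv1, heq ▸ hv2⟩
  have hadj : T8.Adj v1 v2 := by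
    refine ⟨hv12, ?_⟩
    simp only [unitSquare, Set.mem_insert_iff, Set.mem_singleton_iff] at hv1S hv2S
    rcases hv1S with rfl|rfl|rfl|rfl <;> rcases hv2S with rfl|rfl|rfl|rfl <;>
      simp_all
  have hd2 : EdgeDist2 e1 e2 :=
    ⟨hne, hsh, s(v1, v2), hadj, ⟨v1, hv1, by simp⟩, ⟨v2, by simp, hv2⟩⟩
  have h2 := hf.2 e1 he1E e2 he2E hd2
  rw [h] at h2
  push_cast at h2
  rw [show (f e1 : ℤ) - (f e1 + 1) = -1 by ring] at h2
  norm_num at h2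
end

section
/- Let f be an L(1,2)-edge labeling of T8, let S be a unit square, and let e1, e2 ∈ G_S be edges sharing an endpoint with f(e1) = c and f(e2) = c + 1, such that e1 and e2 are NOT at angle 45°. Then there exist four pairwise distinct unit squares S1, S2, S3, S4, each distinct from S and each with all vertices in S', such that no edge in G_{S1} and no edge in G_{S2} has label c under f, and no edge in G_{S3} and no edge in G_{S4} has label c + 1 under f. -/
/-!
Write `e1 = s(v, u₁)` and `e2 = s(v, u₂)`. Since their labels differ by one, the label of `e1`
is avoided by every other edge within distance two of `e1` and by every edge at distance two
from `e2`; all edges at the vertices of a unit square through `u₂` that misses `v` and `u₁` are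
of this kind. A neighbour `u₂` of `v` lies in two unit squares missing `v`, and when `e1`, `e2`
are not at angle `45°` such a square also misses `u₁`. Symmetrically for `u₁`, this gives the
four squares: they are distinct, differ from `S` (which contains `v`, or both `u₁` and `u₂`),
and lie in `S'` because all their vertices are within distance two of `v`.
-/

lemma t8_adj_iff {u v : ℤ × ℤ} :
    T8.Adj u v ↔ u ≠ v ∧ |u.1 - v.1| ≤ 1 ∧ |u.2 - v.2| ≤ 1 := by
  constructor
  · rintro ⟨hne, h⟩
    exact ⟨hne, h ▸ le_max_left _ _, h ▸ le_max_right _ _⟩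
  · rintro ⟨hne, h₁, h₂⟩
    refine ⟨hne, le_antisymm (max_le h₁ h₂) ?_⟩
    by_contra! hlt
    rw [max_lt_iff, abs_lt, abs_lt] at hlt
    exact hne (Prod.ext (by omega) (by omega))

lemma abs_sub_le_one_of_eq_or_adj {x y : ℤ × ℤ} (h : x = y ∨ T8.Adj x y) :
    |x.1 - y.1| ≤ 1 ∧ |x.2 - y.2| ≤ 1 := by
  rcases h with rfl | h
  · simp
  · exact (t8_adj_iff.1 h).2

lemma exists_adj_and_eq_of_mem_edgeSet {e : Sym2 (ℤ × ℤ)} {v : ℤ × ℤ} (he : e ∈ T8.edgeSet)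
    (hv : v ∈ e) : ∃ u, T8.Adj v u ∧ e = s(v, u) := by
  refine ⟨Sym2.Mem.other hv, ?_, (Sym2.other_spec hv).symm⟩
  rwa [← SimpleGraph.mem_edgeSet, Sym2.other_spec hv]

lemma mem_or_mem_of_mem_GS {S : Set (ℤ × ℤ)} {x y : ℤ × ℤ} (h : s(x, y) ∈ GS S) :
    x ∈ S ∨ y ∈ S := by
  obtain ⟨-, w, hw, hwe⟩ := h
  rcases Sym2.mem_iff.1 hwe with rfl | rfl
  exacts [Or.inl hw, Or.inr hw]

lemma angle45_comm {e₁ e₂ : Sym2 (ℤ × ℤ)} (h : Angle45 e₁ e₂) : Angle45 e₂ e₁ := by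
  obtain ⟨v, d₁, d₂, rfl, rfl, hxor, hdot⟩ := h
  refine ⟨v, d₂, d₁, rfl, rfl, ?_, by rw [← hdot]; ring⟩
  show Xor _ _
  rwa [xor_comm]

lemma mem_unitSquare_iff {a b : ℤ} {u : ℤ × ℤ} :
    u ∈ unitSquare a b ↔ (u.1 = a ∨ u.1 = a + 1) ∧ (u.2 = b ∨ u.2 = b + 1) := by
  obtain ⟨x, y⟩ := u
  simp only [unitSquare, Set.mem_insert_iff, Set.mem_singleton_iff, Prod.mk.injEq]
  tauto

lemma eq_or_adj_of_mem_unitSquare {a b : ℤ} {x y : ℤ × ℤ} (hx : x ∈ unitSquare a b)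
    (hy : y ∈ unitSquare a b) : x = y ∨ T8.Adj x y := by
  rw [or_iff_not_imp_left, t8_adj_iff, abs_le, abs_le]
  rw [mem_unitSquare_iff] at hx hy
  intro hne
  exact ⟨hne, by omega, by omega⟩

lemma unitSquare_subset_Sprime {a b : ℤ} {p u v : ℤ × ℤ} (hu : u ∈ unitSquare p.1 p.2)
    (huv : T8.Adj v u) (hS : v ∈ unitSquare a b ∨ u ∈ unitSquare a b) :
    unitSquare p.1 p.2 ⊆ Sprime a b := by
  obtain ⟨s, hs, hsu⟩ : ∃ s ∈ unitSquare a b, s = u ∨ T8.Adj s u := by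
    rcases hS with hv | hu
    exacts [⟨v, hv, Or.inr huv⟩, ⟨u, hu, Or.inl rfl⟩]
  intro w hw
  obtain ⟨hw₁, hw₂⟩ := abs_sub_le_one_of_eq_or_adj (eq_or_adj_of_mem_unitSquare hw hu)
  obtain ⟨hs₁, hs₂⟩ := abs_sub_le_one_of_eq_or_adj hsu
  refine ⟨s, hs, max_le ?_ ?_⟩
  · linarith [abs_sub_le w.1 u.1 s.1, abs_sub_comm u.1 s.1]
  · linarith [abs_sub_le w.2 u.2 s.2, abs_sub_comm u.2 s.2]

lemma ne_of_mem_unitSquare_of_not_mem {p q u : ℤ × ℤ} (hp : u ∈ unitSquare p.1 p.2)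
    (hq : u ∉ unitSquare q.1 q.2) : p ≠ q := by
  rintro rfl
  exact hq hp

lemma ne_of_not_mem_unitSquare {a b : ℤ} {p v u : ℤ × ℤ}
    (hS : v ∈ unitSquare a b ∨ u ∈ unitSquare a b) (hv : v ∉ unitSquare p.1 p.2)
    (hu : u ∉ unitSquare p.1 p.2) : p ≠ (a, b) := by
  rintro rfl
  tauto

lemma exists_two_unitSquares_mem_not_mem {u v : ℤ × ℤ} (h : T8.Adj v u) :
    ∃ p q : ℤ × ℤ, p ≠ q ∧ u ∈ unitSquare p.1 p.2 ∧ u ∈ unitSquare q.1 q.2 ∧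
      v ∉ unitSquare p.1 p.2 ∧ v ∉ unitSquare q.1 q.2 := by
  obtain ⟨hne, h₁, h₂⟩ := t8_adj_iff.1 h
  rw [abs_le] at h₁ h₂
  simp only [mem_unitSquare_iff, ne_eq, Prod.ext_iff]
  -- in a coordinate where `u` and `v` differ, `{min t (2 * t - s), min t (2 * t - s) + 1}`
  -- is `{t, 2 * t - s}`: it contains `u`'s coordinate `t` and not `v`'s coordinate `s`
  by_cases hx : v.1 = u.1
  · have hy : v.2 ≠ u.2 := fun hy => hne (Prod.ext hx hy)
    refine ⟨(u.1, min u.2 (2 * u.2 - v.2)), (u.1 - 1, min u.2 (2 * u.2 - v.2)), ?_⟩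
    omega
  · refine ⟨(min u.1 (2 * u.1 - v.1), u.2), (min u.1 (2 * u.1 - v.1), u.2 - 1), ?_⟩
    omega

lemma angle45_of_mem_unitSquare {v u₁ u₂ : ℤ × ℤ} (h₁ : T8.Adj v u₁) (h₂ : T8.Adj v u₂)
    (hne : u₁ ≠ u₂) {a b : ℤ} (hu₁ : u₁ ∈ unitSquare a b) (hu₂ : u₂ ∈ unitSquare a b)
    (hv : v ∉ unitSquare a b) : Angle45 s(v, u₁) s(v, u₂) := by
  refine ⟨v, u₁ - v, u₂ - v, by simp, by simp, ?_⟩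
  show Xor _ _ ∧ _
  rw [xor_def]
  obtain ⟨-, h₁x, h₁y⟩ := t8_adj_iff.1 h₁
  obtain ⟨-, h₂x, h₂y⟩ := t8_adj_iff.1 h₂
  rw [mem_unitSquare_iff] at hu₁ hu₂ hv
  rw [Ne, Prod.ext_iff] at hne
  rw [abs_le] at h₁x h₁y h₂x h₂y
  simp only [Prod.fst_sub, Prod.snd_sub]
  generalize hx₁ : u₁.1 - v.1 = x₁
  generalize hy₁ : u₁.2 - v.2 = y₁
  generalize hx₂ : u₂.1 - v.1 = x₂
  generalize hy₂ : u₂.2 - v.2 = y₂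
  -- the square misses `v` in some coordinate; there `u₁` and `u₂` both sit one step from `v`
  -- on the same side, so they differ in the other coordinate, where one of them agrees with `v`
  have key : (x₁ = x₂ ∧ (x₁ = 1 ∨ x₁ = -1) ∧
        (y₁ = 0 ∧ (y₂ = 1 ∨ y₂ = -1) ∨ y₂ = 0 ∧ (y₁ = 1 ∨ y₁ = -1))) ∨
      (y₁ = y₂ ∧ (y₁ = 1 ∨ y₁ = -1) ∧
        (x₁ = 0 ∧ (x₂ = 1 ∨ x₂ = -1) ∨ x₂ = 0 ∧ (x₁ = 1 ∨ x₁ = -1))) := by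
    rcases not_and_or.1 hv with hv | hv
    · left; omega
    · right; omega
  rcases key with ⟨rfl, hs, ht⟩ | ⟨rfl, hs, ht⟩ <;> rcases hs with rfl | rfl <;>
    rcases ht with ⟨rfl, rfl | rfl⟩ | ⟨rfl, rfl | rfl⟩ <;> norm_num

namespace IsL12

variable {f : Sym2 (ℤ × ℤ) → ℕ}

lemma two_le_abs_sub_of_adj (hf : IsL12 f) {e e' : Sym2 (ℤ × ℤ)} (he : e ∈ T8.edgeSet)
    (he' : e' ∈ T8.edgeSet) (hdisj : ¬ SharesEndpoint e e') {x y : ℤ × ℤ} (hx : x ∈ e)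
    (hy : y ∈ e') (hxy : T8.Adj x y) : 2 ≤ |(f e : ℤ) - f e'| :=
  hf.2 e he e' he' ⟨fun h => hdisj ⟨x, hx, h ▸ hx⟩, hdisj,
    s(x, y), hxy, ⟨x, hx, Sym2.mem_mk_left x y⟩, ⟨y, Sym2.mem_mk_right x y, hy⟩⟩

lemma ne_of_eq_or_adj (hf : IsL12 f) {e e' : Sym2 (ℤ × ℤ)} (he : e ∈ T8.edgeSet)
    (he' : e' ∈ T8.edgeSet) (hne : e ≠ e') {x y : ℤ × ℤ} (hx : x ∈ e) (hy : y ∈ e')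
    (hxy : x = y ∨ T8.Adj x y) : f e ≠ f e' := by
  by_cases hs : SharesEndpoint e e'
  · exact hf.1 e he e' he' ⟨hne, hs⟩
  · rcases hxy with rfl | hxy
    · exact absurd ⟨x, hx, hy⟩ hs
    · intro h
      have := hf.two_le_abs_sub_of_adj he he' hs hx hy hxy
      rw [h, sub_self, abs_zero] at this
      norm_num at this

lemma apply_ne_of_mem_GS (hf : IsL12 f) {v u₁ u₂ : ℤ × ℤ} (h₁ : T8.Adj v u₁)
    (h₂ : T8.Adj v u₂) (hlab : |(f s(v, u₁) : ℤ) - f s(v, u₂)| ≤ 1) {Q : Set (ℤ × ℤ)}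
    (hQ : ∀ w ∈ Q, w = u₂ ∨ T8.Adj w u₂) (hv : v ∉ Q) (hu₁ : u₁ ∉ Q) {e : Sym2 (ℤ × ℤ)}
    (he : e ∈ GS Q) : f e ≠ f s(v, u₁) := by
  obtain ⟨heE, w, hwQ, hwe⟩ := he
  by_cases hs : SharesEndpoint e s(v, u₂)
  · obtain ⟨t, hte, ht⟩ := hs
    have hne : e ≠ s(v, u₁) := by
      rintro rfl
      rcases Sym2.mem_iff.1 hwe with rfl | rfl
      exacts [hv hwQ, hu₁ hwQ]
    refine hf.ne_of_eq_or_adj heE h₁ hne hte (Sym2.mem_mk_left v u₁) ?_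
    rcases Sym2.mem_iff.1 ht with rfl | rfl
    exacts [Or.inl rfl, Or.inr h₂.symm]
  · have hw : T8.Adj w u₂ := (hQ w hwQ).resolve_left <| by
      rintro rfl
      exact hs ⟨w, hwe, Sym2.mem_mk_right v w⟩
    have := hf.two_le_abs_sub_of_adj heE h₂ hs hwe (Sym2.mem_mk_right v u₂) hw
    intro h
    rw [h] at this
    linarith

lemma exists_two_unitSquares_apply_ne (hf : IsL12 f) {v u₁ u₂ : ℤ × ℤ} (h₁ : T8.Adj v u₁)
    (h₂ : T8.Adj v u₂) (hne : u₁ ≠ u₂) (hang : ¬ Angle45 s(v, u₁) s(v, u₂))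
    (hlab : |(f s(v, u₁) : ℤ) - f s(v, u₂)| ≤ 1) :
    ∃ p q : ℤ × ℤ, p ≠ q ∧
      (u₂ ∈ unitSquare p.1 p.2 ∧ v ∉ unitSquare p.1 p.2 ∧ u₁ ∉ unitSquare p.1 p.2 ∧
        ∀ e ∈ GS (unitSquare p.1 p.2), f e ≠ f s(v, u₁)) ∧
      (u₂ ∈ unitSquare q.1 q.2 ∧ v ∉ unitSquare q.1 q.2 ∧ u₁ ∉ unitSquare q.1 q.2 ∧
        ∀ e ∈ GS (unitSquare q.1 q.2), f e ≠ f s(v, u₁)) := by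
  have hsquare {r : ℤ × ℤ} (hu₂ : u₂ ∈ unitSquare r.1 r.2) (hv : v ∉ unitSquare r.1 r.2) :
      u₂ ∈ unitSquare r.1 r.2 ∧ v ∉ unitSquare r.1 r.2 ∧ u₁ ∉ unitSquare r.1 r.2 ∧
        ∀ e ∈ GS (unitSquare r.1 r.2), f e ≠ f s(v, u₁) := by
    have hu₁ : u₁ ∉ unitSquare r.1 r.2 := fun hu₁ =>
      hang (angle45_of_mem_unitSquare h₁ h₂ hne hu₁ hu₂ hv)
    exact ⟨hu₂, hv, hu₁, fun e he => hf.apply_ne_of_mem_GS h₁ h₂ hlab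
      (fun w hw => eq_or_adj_of_mem_unitSquare hw hu₂) hv hu₁ he⟩
  obtain ⟨p, q, hpq, hup, huq, hvp, hvq⟩ := exists_two_unitSquares_mem_not_mem h₂
  exact ⟨p, q, hpq, hsquare hup hvp, hsquare huq hvq⟩

end IsL12

/-- If two edges of `G_S` sharing an endpoint, not at angle `45°`,
get consecutive labels `c` and `c+1`, then there are four pairwise distinct unit
squares (all distinct from `S`, with all vertices in `S'`) such that `c` is not
used on `G_{S1}`, `G_{S2}` and `c+1` is not used on `G_{S3}`, `G_{S4}`. -/
theorem consecutive_not45_four_squares (f : Sym2 (ℤ × ℤ) → ℕ) (hf : IsL12 f)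
    (a b : ℤ) (c : ℕ) (e1 e2 : Sym2 (ℤ × ℤ))
    (he1 : e1 ∈ GS (unitSquare a b)) (he2 : e2 ∈ GS (unitSquare a b))
    (hshare : SharesEndpoint e1 e2)
    (hf1 : f e1 = c) (hf2 : f e2 = c + 1) (hang : ¬ Angle45 e1 e2) :
    ∃ p1 p2 p3 p4 : ℤ × ℤ,
      ([p1, p2, p3, p4, (a, b)] : List (ℤ × ℤ)).Pairwise (· ≠ ·) ∧
      (∀ p ∈ ([p1, p2, p3, p4] : List (ℤ × ℤ)), unitSquare p.1 p.2 ⊆ Sprime a b) ∧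
      (∀ e ∈ GS (unitSquare p1.1 p1.2), f e ≠ c) ∧
      (∀ e ∈ GS (unitSquare p2.1 p2.2), f e ≠ c) ∧
      (∀ e ∈ GS (unitSquare p3.1 p3.2), f e ≠ c + 1) ∧
      (∀ e ∈ GS (unitSquare p4.1 p4.2), f e ≠ c + 1) := by
  obtain ⟨v, hv₁, hv₂⟩ := hshare
  obtain ⟨u₁, h₁, rfl⟩ := exists_adj_and_eq_of_mem_edgeSet he1.1 hv₁
  obtain ⟨u₂, h₂, rfl⟩ := exists_adj_and_eq_of_mem_edgeSet he2.1 hv₂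
  have hS₁ := mem_or_mem_of_mem_GS he1
  have hS₂ := mem_or_mem_of_mem_GS he2
  have hu : u₁ ≠ u₂ := by rintro rfl; omega
  have hlab : |(f s(v, u₁) : ℤ) - f s(v, u₂)| ≤ 1 := by rw [hf1, hf2]; norm_num
  obtain ⟨p₁, p₂, h₁₂, ⟨hu₂p₁, hvp₁, hu₁p₁, hfp₁⟩, ⟨hu₂p₂, hvp₂, hu₁p₂, hfp₂⟩⟩ :=
    hf.exists_two_unitSquares_apply_ne h₁ h₂ hu hang hlab
  obtain ⟨p₃, p₄, h₃₄, ⟨hu₁p₃, hvp₃, hu₂p₃, hfp₃⟩, ⟨hu₁p₄, hvp₄, hu₂p₄, hfp₄⟩⟩ :=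
    hf.exists_two_unitSquares_apply_ne h₂ h₁ hu.symm (mt angle45_comm hang)
      (by rwa [abs_sub_comm])
  refine ⟨p₁, p₂, p₃, p₄, ?_, ?_, hf1 ▸ hfp₁, hf1 ▸ hfp₂, hf2 ▸ hfp₃, hf2 ▸ hfp₄⟩
  · simp only [List.pairwise_cons, List.mem_cons, List.not_mem_nil, or_false, forall_eq_or_imp,
      forall_eq, false_implies, implies_true, List.Pairwise.nil, and_true]
    exact ⟨⟨h₁₂, ne_of_mem_unitSquare_of_not_mem hu₂p₁ hu₂p₃,
        ne_of_mem_unitSquare_of_not_mem hu₂p₁ hu₂p₄, ne_of_not_mem_unitSquare hS₁ hvp₁ hu₁p₁⟩,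
      ⟨ne_of_mem_unitSquare_of_not_mem hu₂p₂ hu₂p₃, ne_of_mem_unitSquare_of_not_mem hu₂p₂ hu₂p₄,
        ne_of_not_mem_unitSquare hS₁ hvp₂ hu₁p₂⟩,
      ⟨h₃₄, ne_of_not_mem_unitSquare hS₂ hvp₃ hu₂p₃⟩, ne_of_not_mem_unitSquare hS₂ hvp₄ hu₂p₄⟩
  · simp only [List.mem_cons, List.not_mem_nil, or_false, forall_eq_or_imp, forall_eq]
    exact ⟨unitSquare_subset_Sprime hu₂p₁ h₂ hS₂, unitSquare_subset_Sprime hu₂p₂ h₂ hS₂,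
      unitSquare_subset_Sprime hu₁p₃ h₁ hS₁, unitSquare_subset_Sprime hu₁p₄ h₁ hS₁⟩
end

section
/- Let f be an L(1,2)-edge labeling of T8 and let S be a unit square. Then the number of triangles of T8 all three of whose edges lie in G_S and whose three edge labels under f form a set of three consecutive integers {c − 1, c, c + 1} (for some c ≥ 1) is at most 8. -/
/-!
Every triangle with all its edges in `G_S` has two vertices in `S`; if these are opposite
corners of `S`, the third vertex is one of the other two corners. Hence each counted triangle
contains one of the four sides of `S`, and it suffices to show that at most two triangles with
consecutive labels share an edge `uv`. For two such triangles `uvw₁`, `uvw₂`, the edges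
`uw₁, uw₂` (and `vw₁, vw₂`) share an endpoint while `uw₁, vw₂` (and `uw₂, vw₁`) are at
distance two; since all labels lie within `2` of `f(uv)`, this forces `f(uv)` to be the largest label of one
triangle and the smallest of the other, which cannot happen for three triangles pairwise.
-/

lemma Set.encard_le_two_of_forall {α : Type*} {s : Set α}
    (h : ∀ x ∈ s, ∀ y ∈ s, ∀ z ∈ s, x = y ∨ x = z ∨ y = z) : s.encard ≤ 2 := by
  by_contra! hs
  obtain ⟨t, hts, ht⟩ := Set.exists_subset_encard_eq (Order.add_one_le_of_lt hs)
  obtain ⟨x, y, z, hxy, hxz, hyz, rfl⟩ := Set.encard_eq_three.mp ht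
  rcases h x (hts (by simp)) y (hts (by simp)) z (hts (by simp)) with h | h | h
  exacts [hxy h, hxz h, hyz h]

lemma Finset.exists_eq_insert_insert_of_card_eq_three {α : Type*} [DecidableEq α]
    {t : Finset α} (ht : t.card = 3) {p q : α} (hp : p ∈ t) (hq : q ∈ t) (hpq : p ≠ q) :
    ∃ w, w ≠ p ∧ w ≠ q ∧ t = {p, q, w} := by
  have hq' : q ∈ t.erase p := Finset.mem_erase.mpr ⟨hpq.symm, hq⟩
  obtain ⟨w, hw⟩ := Finset.card_eq_one.mp (show ((t.erase p).erase q).card = 1 by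
    rw [Finset.card_erase_of_mem hq', Finset.card_erase_of_mem hp, ht])
  have hw' : w ∈ (t.erase p).erase q := hw ▸ Finset.mem_singleton_self w
  simp only [Finset.mem_erase] at hw'
  refine ⟨w, hw'.2.1, hw'.1, ?_⟩
  rw [← Finset.insert_erase hp, ← Finset.insert_erase hq', hw]

lemma distinct_and_spread_le_two_of_eq_consecutive {x y z c : ℕ} (hc : 1 ≤ c)
    (h : ({x, y, z} : Set ℕ) = {c - 1, c, c + 1}) :
    x ≠ y ∧ x ≠ z ∧ y ≠ z ∧ max x (max y z) ≤ min x (min y z) + 2 := by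
  have hmem : ∀ n ∈ ({c - 1, c, c + 1} : Set ℕ), n = x ∨ n = y ∨ n = z := by
    rw [← h]; simp
  rcases hmem (c - 1) (by simp) with h₁ | h₁ | h₁ <;>
    rcases hmem c (by simp) with h₂ | h₂ | h₂ <;>
    rcases hmem (c + 1) (by simp) with h₃ | h₃ | h₃ <;> omega

lemma abs_sub_le_one_of_T8_adj {u v : ℤ × ℤ} (h : T8.Adj u v) :
    |u.1 - v.1| ≤ 1 ∧ |u.2 - v.2| ≤ 1 :=
  ⟨h.2 ▸ le_max_left _ _, h.2 ▸ le_max_right _ _⟩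

lemma eq_or_eq_of_T8_adj_of_slanting {p q r : ℤ × ℤ} (hpq : T8.Adj p q)
    (h₁ : p.1 ≠ q.1) (h₂ : p.2 ≠ q.2) (hrp : T8.Adj r p) (hrq : T8.Adj r q) :
    r = (p.1, q.2) ∨ r = (q.1, p.2) := by
  have hpq' := abs_sub_le_one_of_T8_adj hpq
  have hrp' := abs_sub_le_one_of_T8_adj hrp
  have hrq' := abs_sub_le_one_of_T8_adj hrq
  have hne : r ≠ p ∧ r ≠ q := ⟨hrp.ne, hrq.ne⟩
  simp only [abs_le, ne_eq, Prod.ext_iff] at hpq' hrp' hrq' hne ⊢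
  omega

lemma triangleEdges_eq {u v w : ℤ × ℤ} (huv : u ≠ v) (huw : u ≠ w) (hvw : v ≠ w) :
    triangleEdges {u, v, w} = {s(u, v), s(u, w), s(v, w)} := by
  ext e
  simp only [triangleEdges, Finset.mem_insert, Finset.mem_singleton, Set.mem_insert_iff,
    Set.mem_singleton_iff]
  constructor
  · rintro ⟨x, hx, y, hy, hxy, rfl⟩
    rcases hx with rfl | rfl | rfl <;> rcases hy with rfl | rfl | rfl <;>
      simp_all [Sym2.eq_swap]
  · rintro (rfl | rfl | rfl)
    · exact ⟨u, by simp, v, by simp, huv, rfl⟩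
    · exact ⟨u, by simp, w, by simp, huw, rfl⟩
    · exact ⟨v, by simp, w, by simp, hvw, rfl⟩

lemma IsTriangle.common_neighbor {p q w : ℤ × ℤ} (ht : IsTriangle {p, q, w}) (hwp : w ≠ p)
    (hwq : w ≠ q) : T8.Adj p w ∧ T8.Adj q w :=
  ⟨ht.2 p (by simp) w (by simp) hwp.symm, ht.2 q (by simp) w (by simp) hwq.symm⟩

def HasConsecutiveLabels (f : Sym2 (ℤ × ℤ) → ℕ) (t : Finset (ℤ × ℤ)) : Prop :=
  ∃ c : ℕ, 1 ≤ c ∧ f '' triangleEdges t = {c - 1, c, c + 1}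

def consecutiveTrianglesThrough (f : Sym2 (ℤ × ℤ) → ℕ) (p q : ℤ × ℤ) :
    Set (Finset (ℤ × ℤ)) :=
  {t | IsTriangle t ∧ HasConsecutiveLabels f t ∧ p ∈ t ∧ q ∈ t}

lemma HasConsecutiveLabels.distinct_and_spread_le_two {f : Sym2 (ℤ × ℤ) → ℕ}
    {u v w : ℤ × ℤ} (huv : u ≠ v) (huw : u ≠ w) (hvw : v ≠ w)
    (h : HasConsecutiveLabels f {u, v, w}) :
    f s(u, v) ≠ f s(u, w) ∧ f s(u, v) ≠ f s(v, w) ∧ f s(u, w) ≠ f s(v, w) ∧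
      max (f s(u, v)) (max (f s(u, w)) (f s(v, w))) ≤
        min (f s(u, v)) (min (f s(u, w)) (f s(v, w))) + 2 := by
  obtain ⟨c, hc, himage⟩ := h
  rw [triangleEdges_eq huv huw hvw, Set.image_insert_eq, Set.image_insert_eq,
    Set.image_singleton] at himage
  exact distinct_and_spread_le_two_of_eq_consecutive hc himage

namespace IsL12

variable {f : Sym2 (ℤ × ℤ) → ℕ}

lemma apply_ne_of_adj (hf : IsL12 f) {x y w : ℤ × ℤ} (hxy : T8.Adj x y) (hxw : T8.Adj x w)
    (hyw : y ≠ w) : f s(x, y) ≠ f s(x, w) := by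
  refine hf.1 _ hxy _ hxw ⟨?_, x, Sym2.mem_mk_left x y, Sym2.mem_mk_left x w⟩
  rw [Ne, Sym2.eq_iff]
  rintro (⟨-, h⟩ | ⟨-, h⟩)
  exacts [hyw h, hxy.ne h.symm]

lemma two_le_abs_sub (hf : IsL12 f) {u v w₁ w₂ : ℤ × ℤ} (huv : T8.Adj u v)
    (h₁ : T8.Adj u w₁) (h₂ : T8.Adj v w₂) (hv₁ : w₁ ≠ v) (hu₂ : w₂ ≠ u) (h₁₂ : w₁ ≠ w₂) :
    2 ≤ |(f s(u, w₁) : ℤ) - f s(v, w₂)| := by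
  have hdisjoint : ¬ SharesEndpoint s(u, w₁) s(v, w₂) := by
    rintro ⟨z, hz₁, hz₂⟩
    rw [Sym2.mem_iff] at hz₁ hz₂
    rcases hz₁ with rfl | rfl <;> rcases hz₂ with rfl | rfl
    exacts [huv.ne rfl, hu₂ rfl, hv₁ rfl, h₁₂ rfl]
  exact hf.2 _ h₁ _ h₂ ⟨fun he ↦ hdisjoint ⟨u, by simp, he ▸ by simp⟩, hdisjoint,
    s(u, v), huv, ⟨u, by simp, by simp⟩, ⟨v, by simp, by simp⟩⟩

lemma extreme_of_consecutive_triangles (hf : IsL12 f) {u v w₁ w₂ : ℤ × ℤ}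
    (huv : T8.Adj u v) (h₁ : T8.Adj u w₁ ∧ T8.Adj v w₁) (h₂ : T8.Adj u w₂ ∧ T8.Adj v w₂)
    (h₁₂ : w₁ ≠ w₂) (hc₁ : HasConsecutiveLabels f {u, v, w₁})
    (hc₂ : HasConsecutiveLabels f {u, v, w₂}) :
    (f s(u, w₁) < f s(u, v) ∧ f s(v, w₁) < f s(u, v) ∧
        f s(u, v) < f s(u, w₂) ∧ f s(u, v) < f s(v, w₂)) ∨
      (f s(u, v) < f s(u, w₁) ∧ f s(u, v) < f s(v, w₁) ∧
        f s(u, w₂) < f s(u, v) ∧ f s(v, w₂) < f s(u, v)) := by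
  have hs₁ := hc₁.distinct_and_spread_le_two huv.ne h₁.1.ne h₁.2.ne
  have hs₂ := hc₂.distinct_and_spread_le_two huv.ne h₂.1.ne h₂.2.ne
  have hu := hf.apply_ne_of_adj h₁.1 h₂.1 h₁₂
  have hv := hf.apply_ne_of_adj h₁.2 h₂.2 h₁₂
  have hd₁₂ := hf.two_le_abs_sub huv h₁.1 h₂.2 h₁.2.ne' h₂.1.ne' h₁₂
  have hd₂₁ := hf.two_le_abs_sub huv h₂.1 h₁.2 h₂.2.ne' h₁.1.ne' h₁₂.symm
  rw [le_abs'] at hd₁₂ hd₂₁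
  omega

lemma encard_consecutiveTrianglesThrough_le_two (hf : IsL12 f) {p q : ℤ × ℤ} (hpq : p ≠ q) :
    (consecutiveTrianglesThrough f p q).encard ≤ 2 := by
  refine Set.encard_le_two_of_forall ?_
  rintro t₁ ⟨T₁, C₁, hp₁, hq₁⟩ t₂ ⟨T₂, C₂, hp₂, hq₂⟩ t₃ ⟨T₃, C₃, hp₃, hq₃⟩
  by_contra! hne
  have huv := T₁.2 p hp₁ q hq₁ hpq
  obtain ⟨w₁, hw₁p, hw₁q, rfl⟩ := Finset.exists_eq_insert_insert_of_card_eq_three T₁.1 hp₁ hq₁ hpq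
  obtain ⟨w₂, hw₂p, hw₂q, rfl⟩ := Finset.exists_eq_insert_insert_of_card_eq_three T₂.1 hp₂ hq₂ hpq
  obtain ⟨w₃, hw₃p, hw₃q, rfl⟩ := Finset.exists_eq_insert_insert_of_card_eq_three T₃.1 hp₃ hq₃ hpq
  have N₁ := T₁.common_neighbor hw₁p hw₁q
  have N₂ := T₂.common_neighbor hw₂p hw₂q
  have N₃ := T₃.common_neighbor hw₃p hw₃q
  have h₁₂ := hf.extreme_of_consecutive_triangles huv N₁ N₂ (by rintro rfl; exact hne.1 rfl) C₁ C₂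
  have h₁₃ := hf.extreme_of_consecutive_triangles huv N₁ N₃ (by rintro rfl; exact hne.2.1 rfl) C₁ C₃
  have h₂₃ := hf.extreme_of_consecutive_triangles huv N₂ N₃ (by rintro rfl; exact hne.2.2 rfl) C₂ C₃
  omega

end IsL12

def unitSquareSides (a b : ℤ) : Finset ((ℤ × ℤ) × (ℤ × ℤ)) :=
  {((a, b), (a + 1, b)), ((a, b + 1), (a + 1, b + 1)), ((a, b), (a, b + 1)),
    ((a + 1, b), (a + 1, b + 1))}

lemma fst_ne_snd_of_mem_unitSquareSides {a b : ℤ} {s : (ℤ × ℤ) × (ℤ × ℤ)}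
    (hs : s ∈ unitSquareSides a b) : s.1 ≠ s.2 := by
  simp only [unitSquareSides, Finset.mem_insert, Finset.mem_singleton] at hs
  rcases hs with rfl | rfl | rfl | rfl <;> simp

lemma mem_unitSquareSides_of_aligned {a b : ℤ} {p q : ℤ × ℤ} (hp : p ∈ unitSquare a b)
    (hq : q ∈ unitSquare a b) (hpq : p ≠ q) (haligned : p.1 = q.1 ∨ p.2 = q.2) :
    (p, q) ∈ unitSquareSides a b ∨ (q, p) ∈ unitSquareSides a b := by
  obtain ⟨p₁, p₂⟩ := p
  obtain ⟨q₁, q₂⟩ := q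
  simp only [mem_unitSquare_iff] at hp hq
  rcases hp with ⟨h₁ | h₁, h₂ | h₂⟩ <;> rcases hq with ⟨h₃ | h₃, h₄ | h₄⟩ <;>
    simp_all [unitSquareSides]

lemma IsTriangle.exists_side_of_mem_unitSquare {a b : ℤ} {t : Finset (ℤ × ℤ)}
    (ht : IsTriangle t) {p q r : ℤ × ℤ} (hpt : p ∈ t) (hqt : q ∈ t) (hrt : r ∈ t)
    (hpq : p ≠ q) (hpr : p ≠ r) (hqr : q ≠ r) (hp : p ∈ unitSquare a b)
    (hq : q ∈ unitSquare a b) :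
    ∃ s ∈ unitSquareSides a b, s.1 ∈ t ∧ s.2 ∈ t := by
  have of_aligned : ∀ x ∈ t, ∀ y ∈ t, x ∈ unitSquare a b → y ∈ unitSquare a b → x ≠ y →
      (x.1 = y.1 ∨ x.2 = y.2) → ∃ s ∈ unitSquareSides a b, s.1 ∈ t ∧ s.2 ∈ t := by
    intro x hxt y hyt hx hy hxy haligned
    rcases mem_unitSquareSides_of_aligned hx hy hxy haligned with h | h
    exacts [⟨_, h, hxt, hyt⟩, ⟨_, h, hyt, hxt⟩]
  by_cases haligned : p.1 = q.1 ∨ p.2 = q.2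
  · exact of_aligned p hpt q hqt hp hq hpq haligned
  rw [not_or] at haligned
  have hr := eq_or_eq_of_T8_adj_of_slanting (ht.2 p hpt q hqt hpq) haligned.1 haligned.2
    (ht.2 r hrt p hpt hpr.symm) (ht.2 r hrt q hqt hqr.symm)
  have hrS : r ∈ unitSquare a b := by
    rw [mem_unitSquare_iff] at hp hq ⊢
    rcases hr with rfl | rfl
    exacts [⟨hp.1, hq.2⟩, ⟨hq.1, hp.2⟩]
  refine of_aligned p hpt r hrt hp hrS hpr ?_
  rcases hr with rfl | rfl
  exacts [Or.inl rfl, Or.inr rfl]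

lemma IsTriangle.exists_side_of_subset_GS {a b : ℤ} {t : Finset (ℤ × ℤ)} (ht : IsTriangle t)
    (hS : triangleEdges t ⊆ GS (unitSquare a b)) :
    ∃ s ∈ unitSquareSides a b, s.1 ∈ t ∧ s.2 ∈ t := by
  have hcover : ∀ x ∈ t, ∀ y ∈ t, x ≠ y → x ∈ unitSquare a b ∨ y ∈ unitSquare a b := by
    intro x hx y hy hxy
    obtain ⟨-, z, hz, hze⟩ := hS ⟨x, hx, y, hy, hxy, rfl⟩
    rcases Sym2.mem_iff.mp hze with rfl | rfl
    exacts [Or.inl hz, Or.inr hz]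
  obtain ⟨u, v, w, huv, huw, hvw, rfl⟩ := Finset.card_eq_three.mp ht.1
  have hu : u ∈ ({u, v, w} : Finset (ℤ × ℤ)) := by simp
  have hv : v ∈ ({u, v, w} : Finset (ℤ × ℤ)) := by simp
  have hw : w ∈ ({u, v, w} : Finset (ℤ × ℤ)) := by simp
  by_cases huS : u ∈ unitSquare a b
  · by_cases hvS : v ∈ unitSquare a b
    · exact ht.exists_side_of_mem_unitSquare hu hv hw huv huw hvw huS hvS
    · have hwS := (hcover v hv w hw hvw).resolve_left hvS
      exact ht.exists_side_of_mem_unitSquare hu hw hv huw huv hvw.symm huS hwS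
  · have hvS := (hcover u hu v hv huv).resolve_left huS
    have hwS := (hcover u hu w hw huw).resolve_left huS
    exact ht.exists_side_of_mem_unitSquare hv hw hu hvw huv.symm huw.symm hvS hwS

/-- The number of triangles of `T8` with all edges in `G_S` whose
edge labels form a set `{c-1, c, c+1}` of three consecutive integers is at most
`8`. -/
theorem consecutive_triangles_le_eight (f : Sym2 (ℤ × ℤ) → ℕ) (hf : IsL12 f)
    (a b : ℤ) :
    {t : Finset (ℤ × ℤ) | IsTriangle t ∧ triangleEdges t ⊆ GS (unitSquare a b) ∧
      ∃ c : ℕ, 1 ≤ c ∧ f '' triangleEdges t = {c - 1, c, c + 1}}.ncard ≤ 8 := by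
  have hcover : {t | IsTriangle t ∧ triangleEdges t ⊆ GS (unitSquare a b) ∧
      HasConsecutiveLabels f t} ⊆
      ⋃ s ∈ unitSquareSides a b, consecutiveTrianglesThrough f s.1 s.2 := by
    rintro t ⟨ht, hS, hc⟩
    obtain ⟨s, hs, h₁, h₂⟩ := ht.exists_side_of_subset_GS hS
    exact Set.mem_biUnion hs ⟨ht, hc, h₁, h₂⟩
  have hcard : (unitSquareSides a b).card ≤ 4 := Finset.card_le_four
  have hbound : (⋃ s ∈ unitSquareSides a b, consecutiveTrianglesThrough f s.1 s.2).encard ≤ 8 :=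
    calc _ ≤ ∑ s ∈ unitSquareSides a b, (consecutiveTrianglesThrough f s.1 s.2).encard :=
          Finset.set_encard_biUnion_le _ _
      _ ≤ ∑ _s ∈ unitSquareSides a b, 2 := Finset.sum_le_sum fun s hs ↦
          hf.encard_consecutiveTrianglesThrough_le_two (fst_ne_snd_of_mem_unitSquareSides hs)
      _ ≤ 8 := by
          rw [Finset.sum_const, nsmul_eq_mul]
          norm_cast
          omega
  exact (Set.encard_le_coe_iff_finite_ncard_le.mp ((Set.encard_le_encard hcover).trans hbound)).2
end
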